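/- arXiv:2106.01184 — 7 statements merged into one kernel-verified Lean document; each statement's English description precedes it below -/
import Mathlib

section
/- If a path algebra is increasing (x ≤⊕ f(x) for all policy functions f and path-weights x), then it is strictly increasing: for all policy functions f and all x ≠ ∞̄, x <⊕ f(x), i.e. x ≤⊕ f(x) and x ≠ f(x). -/
/-- In a path algebra, increasing implies strictly increasing. -/
theorem increasing_pathAlgebra_strictlyIncreasing {V S : Type*}
    (op : S → S → S) (E : V → V → Set (S → S)) (inf : S)
    (pathf : S → Option (List (V × V)))
    (hP1 : ∀ x, pathf x = none ↔ x = inf)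
    (hP3 : ∀ i j, ∀ f ∈ E i j, ∀ x, pathf (f x) = none ∨
      ∃ p, pathf x = some p ∧ pathf (f x) = some ((i, j) :: p))
    (hincr : ∀ i j, ∀ f ∈ E i j, ∀ x, op x (f x) = x) :
    ∀ i j, ∀ f ∈ E i j, ∀ x, x ≠ inf → op x (f x) = x ∧ x ≠ f x := by
  intro i j f hf x hx
  refine ⟨hincr i j f hf x, ?_⟩
  intro heq
  rcases hP3 i j f hf x with h | ⟨p, hp, hfp⟩
  · exact hx ((hP1 x).mp (heq ▸ h))
  · rw [← heq, hp] at hfp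
    have := Option.some.inj hfp
    have : p.length = ((i, j) :: p).length := by rw [← this]
    simp at this
end

section
/- In a finite routing algebra with free topology, if the dissimilarity r_k(X_{kj}, Y_{kj}) ≤ v for all routers k with v > 0, then r_i(F(X)_{ij}, F(Y)_{ij}) < v, where r is the height-based dissimilarity on path-weights. -/
open Classical

/-- One synchronous Bellman-Ford iteration. -/
def FBF {S : Type*} {n : ℕ} (op : S → S → S) (inf zero : S)
    (A : Fin n → Fin n → S → S) (X : Fin n → Fin n → S) (i j : Fin n) : S :=
  op ((List.finRange n).foldr (fun k acc => op (A i k (X k j)) acc) inf)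
    (if i = j then zero else inf)

/-- Height-based dissimilarity on path-weights. -/
noncomputable def diss {S : Type*} {n : ℕ} (h : Fin n × S → ℕ)
    (i : Fin n) (x y : S) : ℕ :=
  if x = y then 0 else 1 + max (h (i, x)) (h (i, y))

/-- If all entry dissimilarities for destination j are at most v > 0, then
after one iteration the dissimilarity at (i,j) is strictly below v. -/
theorem diss_strict_decrease {S : Type*} {n : ℕ} (op : S → S → S)
    (inf zero : S) (A : Fin n → Fin n → S → S) (h : Fin n × S → ℕ)
    (hsel : ∀ x y, op x y = x ∨ op x y = y)
    (hassoc : ∀ x y z, op (op x y) z = op x (op y z))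
    (hcomm : ∀ x y, op x y = op y x)
    (hzero : ∀ x, op x zero = zero ∧ op zero x = zero)
    (hinf : ∀ x, op x inf = x ∧ op inf x = x)
    (hfix : ∀ i j, A i j inf = inf)
    (hH1 : ∀ (i j : Fin n) (x y : S), y ≠ inf → A i j y = x → h (i, x) < h (j, y))
    (hH2 : ∀ (i : Fin n) (x y : S), op x y = x → x ≠ y → h (i, y) < h (i, x))
    (X Y : Fin n → Fin n → S) (i j : Fin n) (v : ℕ) (hv : 0 < v)
    (hk : ∀ k, diss h k (X k j) (Y k j) ≤ v) :
    diss h i (FBF op inf zero A X i j) (FBF op inf zero A Y i j) < v := by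
  have hidem : ∀ x, op x x = x := fun x => by rcases hsel x x with h' | h' <;> exact h'
  -- generic fold lemmas
  have sel_fold : ∀ (f : Fin n → S) (l : List (Fin n)),
      l.foldr (fun k acc => op (f k) acc) inf = inf ∨
      ∃ k ∈ l, l.foldr (fun k acc => op (f k) acc) inf = f k := by
    intro f l
    induction l with
    | nil => exact Or.inl rfl
    | cons a t ih =>
      simp only [List.foldr_cons]
      rcases hsel (f a) (t.foldr (fun k acc => op (f k) acc) inf) with h' | h'
      · exact Or.inr ⟨a, by simp, h'⟩
      · rcases ih with h'' | ⟨k, hk1, hk2⟩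
        · exact Or.inl (h'.trans h'')
        · exact Or.inr ⟨k, by simp [hk1], h'.trans hk2⟩
  have fold_le : ∀ (f : Fin n → S) (l : List (Fin n)) (k : Fin n), k ∈ l →
      op (l.foldr (fun k acc => op (f k) acc) inf) (f k) =
        l.foldr (fun k acc => op (f k) acc) inf := by
    intro f l
    induction l with
    | nil => intro k hk; simp at hk
    | cons a t ih =>
      intro k hk
      rcases List.mem_cons.mp hk with rfl | hk'
      · simp only [List.foldr_cons]
        rw [hassoc, hcomm (t.foldr (fun k acc => op (f k) acc) inf) (f k),
          ← hassoc, hidem]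
      · simp only [List.foldr_cons]
        rw [hassoc, ih k hk']
  set fX := (List.finRange n).foldr (fun k acc => op (A i k (X k j)) acc) inf with hfX
  set fY := (List.finRange n).foldr (fun k acc => op (A i k (Y k j)) acc) inf with hfY
  by_cases hij : i = j
  · simp only [FBF, if_pos hij]
    rw [(hzero _).1, (hzero _).1]
    simpa [diss] using hv
  · simp only [FBF, if_neg hij]
    rw [(hinf fX).1, (hinf fY).1]
    by_cases heq : fX = fY
    · simpa [diss, heq] using hv
    · rw [diss, if_neg heq]
      have selX := sel_fold (fun k => A i k (X k j)) (List.finRange n)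
      have selY := sel_fold (fun k => A i k (Y k j)) (List.finRange n)
      have leX : ∀ k, op fX (A i k (X k j)) = fX := fun k =>
        fold_le (fun k => A i k (X k j)) (List.finRange n) k (List.mem_finRange k)
      have leY : ∀ k, op fY (A i k (Y k j)) = fY := fun k =>
        fold_le (fun k => A i k (Y k j)) (List.finRange n) k (List.mem_finRange k)
      have bnd : ∀ k, X k j ≠ Y k j →
          h (k, X k j) + 1 ≤ v ∧ h (k, Y k j) + 1 ≤ v := by
        intro k hd
        have := hk k
        rw [diss, if_neg hd] at this
        omega
      by_cases hXinf : fX = inf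
      · by_cases hYinf : fY = inf
        · exact absurd (hXinf.trans hYinf.symm) heq
        · obtain ⟨k', -, hYk'⟩ := selY.resolve_left hYinf
          have hYne : Y k' j ≠ inf := by
            intro hc; exact hYinf (hYk'.trans (by rw [hc, hfix]))
          by_cases hd' : X k' j = Y k' j
          · have := leX k'
            rw [hd', ← hYk', hXinf, (hinf fY).2] at this
            exact absurd this hYinf
          · have h1 : h (i, fY) < h (k', Y k' j) := hH1 i k' fY (Y k' j) hYne hYk'.symm
            have h2 := (bnd k' hd').2
            have h3 : h (i, inf) < h (i, fY) := hH2 i fY inf (hinf fY).1 hYinf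
            rw [hXinf]
            omega
      · by_cases hYinf : fY = inf
        · obtain ⟨k, -, hXk⟩ := selX.resolve_left hXinf
          have hXne : X k j ≠ inf := by
            intro hc; exact hXinf (hXk.trans (by rw [hc, hfix]))
          by_cases hd : X k j = Y k j
          · have := leY k
            rw [← hd, ← hXk, hYinf, (hinf fX).2] at this
            exact absurd this hXinf
          · have h1 : h (i, fX) < h (k, X k j) := hH1 i k fX (X k j) hXne hXk.symm
            have h2 := (bnd k hd).1
            have h3 : h (i, inf) < h (i, fX) := hH2 i fX inf (hinf fX).1 hXinf
            rw [hYinf]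
            omega
        · obtain ⟨k, -, hXk⟩ := selX.resolve_left hXinf
          obtain ⟨k', -, hYk'⟩ := selY.resolve_left hYinf
          have hXne : X k j ≠ inf := by
            intro hc; exact hXinf (hXk.trans (by rw [hc, hfix]))
          have hYne : Y k' j ≠ inf := by
            intro hc; exact hYinf (hYk'.trans (by rw [hc, hfix]))
          -- if X k' j = Y k' j then fY is a term of X's fold, so op fX fY = fX
          by_cases hd : X k j = Y k j
          · by_cases hd' : X k' j = Y k' j
            · -- both: fX = fY, contradiction
              have e1 : op fX fY = fX := by
                have := leX k'; rwa [hd', ← hYk'] at this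
              have e2 : op fY fX = fY := by
                have := leY k; rwa [← hd, ← hXk] at this
              exact absurd (e1.symm.trans ((hcomm fX fY).trans e2)) heq
            · -- direct bound on fY; fX dominated by fY
              have h1 : h (i, fY) < h (k', Y k' j) := hH1 i k' fY (Y k' j) hYne hYk'.symm
              have h2 := (bnd k' hd').2
              have e2 : op fY fX = fY := by
                have := leY k; rwa [← hd, ← hXk] at this
              have h3 : h (i, fX) < h (i, fY) := hH2 i fY fX e2 (Ne.symm heq)
              omega
          · by_cases hd' : X k' j = Y k' j
            · have h1 : h (i, fX) < h (k, X k j) := hH1 i k fX (X k j) hXne hXk.symm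
              have h2 := (bnd k hd).1
              have e1 : op fX fY = fX := by
                have := leX k'; rwa [hd', ← hYk'] at this
              have h3 : h (i, fY) < h (i, fX) := hH2 i fX fY e1 heq
              omega
            · have h1 : h (i, fX) < h (k, X k j) := hH1 i k fX (X k j) hXne hXk.symm
              have h2 := (bnd k hd).1
              have h3 : h (i, fY) < h (k', Y k' j) := hH1 i k' fY (Y k' j) hYne hYk'.symm
              have h4 := (bnd k' hd').2
              omega
end

section
/- In a path algebra, a single synchronous Bellman-Ford iteration preserves consistency: if every entry of state X is consistent with topology A, then every entry of F_A(X) is consistent with A. -/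
/-- Weight of a (valid) path with respect to a topology. -/
def pweightL {V S : Type*} (A : V → V → S → S) (zero : S) : List (V × V) → S
  | [] => zero
  | (i, j) :: q => A i j (pweightL A zero q)

/-- Weight of a path, where `none` is the invalid path ⊥. -/
def pweight {V S : Type*} (A : V → V → S → S) (inf zero : S) :
    Option (List (V × V)) → S
  | none => inf
  | some p => pweightL A zero p

/-- A synchronous Bellman-Ford iteration preserves consistency. -/
theorem iteration_preserves_consistency {S : Type*} {n : ℕ}
    (op : S → S → S) (inf zero : S)
    (A : Fin n → Fin n → S → S)
    (pathf : S → Option (List (Fin n × Fin n)))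
    (hsel : ∀ x y, op x y = x ∨ op x y = y)
    (hP1 : ∀ x, pathf x = none ↔ x = inf)
    (hP3 : ∀ (i j : Fin n) (x : S), pathf (A i j x) = none ∨
      ∃ p, pathf x = some p ∧ pathf (A i j x) = some ((i, j) :: p))
    (hP2 : pathf zero = some [])
    (X : Fin n → Fin n → S)
    (hX : ∀ i j, pweight A inf zero (pathf (X i j)) = X i j) :
    ∀ i j, pweight A inf zero (pathf (FBF op inf zero A X i j)) =
      FBF op inf zero A X i j := by
  intro i j
  have hinf : pweight A inf zero (pathf inf) = inf := by
    rw [(hP1 inf).mpr rfl]; rfl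
  have hop : ∀ x y, pweight A inf zero (pathf x) = x →
      pweight A inf zero (pathf y) = y →
      pweight A inf zero (pathf (op x y)) = op x y := by
    intro x y hx hy
    rcases hsel x y with h | h <;> rw [h] <;> assumption
  have hA : ∀ (a b : Fin n) (x : S), pweight A inf zero (pathf x) = x →
      pweight A inf zero (pathf (A a b x)) = A a b x := by
    intro a b x hx
    rcases hP3 a b x with h | ⟨p, hp, hp'⟩
    · rw [h, (hP1 _).mp h]; rfl
    · rw [hp']
      have : pweightL A zero p = x := by rw [← hx, hp]; rfl
      simp [pweight, pweightL, this]
  have hfold : ∀ (l : List (Fin n)),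
      pweight A inf zero (pathf (l.foldr (fun k acc => op (A i k (X k j)) acc) inf)) =
        l.foldr (fun k acc => op (A i k (X k j)) acc) inf := by
    intro l
    induction l with
    | nil => exact hinf
    | cons k l ih => exact hop _ _ (hA _ _ _ (hX k j)) ih
  unfold FBF
  apply hop _ _ (hfold _)
  split
  · rw [hP2]; rfl
  · exact hinf
end

section
/- In a path algebra, if F_A(X)_{ij} is inconsistent with the topology A, then there exists a router k such that X_{kj} is inconsistent and X_{kj} ≠ F_A(X)_{kj}. -/
/-- An inconsistent entry of `F X` arises from a changed inconsistent entry
of `X` for the same destination. -/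
theorem inconsistent_forces_change {S : Type*} {n : ℕ}
    (op : S → S → S) (inf zero : S)
    (A : Fin n → Fin n → S → S)
    (pathf : S → Option (List (Fin n × Fin n)))
    (hsel : ∀ x y, op x y = x ∨ op x y = y)
    (hP1 : ∀ x, pathf x = none ↔ x = inf)
    (hP3 : ∀ (i j : Fin n) (x : S), pathf (A i j x) = none ∨
      ∃ p, pathf x = some p ∧ pathf (A i j x) = some ((i, j) :: p))
    (hP2 : pathf zero = some [])
    (X : Fin n → Fin n → S) (i j : Fin n)
    (hinc : pweight A inf zero (pathf (FBF op inf zero A X i j)) ≠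
      FBF op inf zero A X i j) :
    ∃ k, pweight A inf zero (pathf (X k j)) ≠ X k j ∧
      X k j ≠ FBF op inf zero A X k j := by
  classical
  set F := FBF op inf zero A X with hF
  -- selectivity of the fold
  have hfold : ∀ (i : Fin n) (L : List (Fin n)),
      L.foldr (fun k acc => op (A i k (X k j)) acc) inf = inf ∨
      ∃ k, L.foldr (fun k acc => op (A i k (X k j)) acc) inf = A i k (X k j) := by
    intro i L
    induction L with
    | nil => left; rfl
    | cons a t ih =>
      rcases hsel (A i a (X a j)) (t.foldr (fun k acc => op (A i k (X k j)) acc) inf) with h | h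
      · right; exact ⟨a, h⟩
      · rw [List.foldr_cons, h]; exact ih
  -- structure of an inconsistent entry of F
  have hform : ∀ i : Fin n,
      pweight A inf zero (pathf (F i j)) ≠ F i j →
      ∃ l p, F i j = A i l (X l j) ∧ pathf (X l j) = some p ∧
        pathf (F i j) = some ((i, l) :: p) ∧
        pweight A inf zero (pathf (X l j)) ≠ X l j := by
    intro i hi
    have hform1 : ∃ l, F i j = A i l (X l j) := by
      have hsel2 := hsel ((List.finRange n).foldr (fun k acc => op (A i k (X k j)) acc) inf)
        (if i = j then zero else inf)
      rcases hsel2 with h | h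
      · rcases hfold i (List.finRange n) with h2 | ⟨l, h2⟩
        · exfalso
          apply hi
          have : F i j = inf := by rw [hF]; unfold FBF; rw [h, h2]
          rw [this, (hP1 inf).mpr rfl]; rfl
        · exact ⟨l, by rw [hF]; unfold FBF; rw [h, h2]⟩
      · exfalso
        apply hi
        have hFe : F i j = if i = j then zero else inf := by rw [hF]; unfold FBF; rw [h]
        by_cases hij : i = j
        · rw [hFe, if_pos hij, hP2]; rfl
        · rw [hFe, if_neg hij, (hP1 inf).mpr rfl]; rfl
    obtain ⟨l, hl⟩ := hform1
    rcases hP3 i l (X l j) with hnone | ⟨p, hp1, hp2⟩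
    · exfalso
      apply hi
      have : F i j = inf := by rw [hl]; exact (hP1 _).mp hnone
      rw [this, (hP1 inf).mpr rfl]; rfl
    · refine ⟨l, p, hl, hp1, by rw [hl]; exact hp2, ?_⟩
      rw [hp1]
      intro hcon
      apply hi
      rw [hl, hp2]
      show A i l (pweightL A zero p) = A i l (X l j)
      rw [show pweightL A zero p = X l j from hcon]
  -- main induction on path length
  have main : ∀ (N : ℕ) (i : Fin n) (p : List (Fin n × Fin n)),
      pathf (F i j) = some p → p.length ≤ N →
      pweight A inf zero (pathf (F i j)) ≠ F i j →
      ∃ k, pweight A inf zero (pathf (X k j)) ≠ X k j ∧ X k j ≠ F k j := by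
    intro N
    induction N with
    | zero =>
      intro i p hp hlen hi
      obtain ⟨l, q, _, _, hq, _⟩ := hform i hi
      rw [hp] at hq
      injection hq with hq
      subst hq
      simp at hlen
    | succ N ih =>
      intro i p hp hlen hi
      obtain ⟨l, q, hFeq, hXl, hq, hXinc⟩ := hform i hi
      by_cases hch : X l j = F l j
      · have hFl : pathf (F l j) = some q := by rw [← hch]; exact hXl
        have hinc' : pweight A inf zero (pathf (F l j)) ≠ F l j := by
          rw [← hch]; exact hXinc
        rw [hp] at hq
        injection hq with hq
        subst hq
        simp only [List.length_cons, Nat.succ_le_succ_iff] at hlen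
        exact ih l q hFl hlen hinc'
      · exact ⟨l, hXinc, hch⟩
  -- start: pathf (F i j) must be some p
  cases hpath : pathf (F i j) with
  | none =>
    exfalso
    apply hinc
    show pweight A inf zero (pathf (F i j)) = F i j
    rw [hpath, (hP1 _).mp hpath]; rfl
  | some p => exact main p.length i p hpath le_rfl hinc
end

section
/- In a path algebra, if state X contains an inconsistent entry, then the length of the shortest path among inconsistent entries strictly increases after one synchronous iteration: every inconsistent entry of F_A(X) has a path strictly longer than the minimum path length over inconsistent entries of X. -/
/-- The length of the shortest inconsistent path strictly increases after one
synchronous iteration. -/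
theorem shortest_inconsistent_increases {S : Type*} {n : ℕ}
    (op : S → S → S) (inf zero : S)
    (A : Fin n → Fin n → S → S)
    (pathf : S → Option (List (Fin n × Fin n)))
    (hsel : ∀ x y, op x y = x ∨ op x y = y)
    (hP1 : ∀ x, pathf x = none ↔ x = inf)
    (hP3 : ∀ (i j : Fin n) (x : S), pathf (A i j x) = none ∨
      ∃ p, pathf x = some p ∧ pathf (A i j x) = some ((i, j) :: p))
    (hP2 : pathf zero = some [])
    (X : Fin n → Fin n → S) (m : ℕ)
    (hex : ∃ i j, pweight A inf zero (pathf (X i j)) ≠ X i j)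
    (hmin : ∀ i j p, pweight A inf zero (pathf (X i j)) ≠ X i j →
      pathf (X i j) = some p → m ≤ p.length) :
    ∀ i j p, pweight A inf zero (pathf (FBF op inf zero A X i j)) ≠
        FBF op inf zero A X i j →
      pathf (FBF op inf zero A X i j) = some p → m < p.length := by

  intro i j p hinc hpath
  -- the foldr value is inf or some A i k (X k j)
  have hfold : ∀ (l : List (Fin n)),
      l.foldr (fun k acc => op (A i k (X k j)) acc) inf = inf ∨
      ∃ k, l.foldr (fun k acc => op (A i k (X k j)) acc) inf = A i k (X k j) := by
    intro l
    induction l with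
    | nil => left; rfl
    | cons a t ih =>
      simp only [List.foldr_cons]
      rcases hsel (A i a (X a j)) (t.foldr (fun k acc => op (A i k (X k j)) acc) inf) with h | h
      · right; exact ⟨a, h⟩
      · rw [h]; exact ih
  have hval : FBF op inf zero A X i j = inf ∨ FBF op inf zero A X i j = zero ∨
      ∃ k, FBF op inf zero A X i j = A i k (X k j) := by
    unfold FBF
    rcases hsel ((List.finRange n).foldr (fun k acc => op (A i k (X k j)) acc) inf)
        (if i = j then zero else inf) with h | h
    · rw [h]
      rcases hfold (List.finRange n) with h' | ⟨k, h'⟩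
      · exact Or.inl h'
      · exact Or.inr (Or.inr ⟨k, h'⟩)
    · rw [h]
      by_cases hij : i = j
      · simp [hij]
      · simp [hij]
  set F := FBF op inf zero A X i j with hF
  rcases hval with h | h | ⟨k, h⟩
  · exfalso; apply hinc
    rw [h, (hP1 inf).mpr rfl]; rfl
  · exfalso; apply hinc
    rw [h, hP2]; rfl
  · rcases hP3 i k (X k j) with hn | ⟨q, hq, hq'⟩
    · exfalso; apply hinc
      have : F = inf := (hP1 F).mp (by rw [h]; exact hn)
      rw [this, (hP1 inf).mpr rfl]; rfl
    · have hpathF : pathf F = some ((i, k) :: q) := by rw [h]; exact hq'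
      have hXkj : pweight A inf zero (pathf (X k j)) ≠ X k j := by
        intro hcons
        apply hinc
        rw [hpathF, h]
        show A i k (pweightL A zero q) = A i k (X k j)
        congr 1
        rw [← hcons, hq]; rfl
      have hm : m ≤ q.length := hmin k j q hXkj hq
      have : p = (i, k) :: q := by
        rw [hpath] at hpathF; exact Option.some.inj hpathF.symm |>.symm
      rw [this]
      simp [Nat.lt_succ_of_le hm]
end

section
/- In a path algebra over n routers, starting from any state X, after n synchronous iterations the state (F_A)ⁿ(X) is consistent with the topology A (contains no inconsistent entries). -/
/-- After n synchronous iterations the state is consistent. -/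
theorem consistent_after_n_iterations {S : Type*} {n : ℕ}
    (op : S → S → S) (inf zero : S)
    (A : Fin n → Fin n → S → S)
    (pathf : S → Option (List (Fin n × Fin n)))
    (hsel : ∀ x y, op x y = x ∨ op x y = y)
    (hP1 : ∀ x, pathf x = none ↔ x = inf)
    (hP3 : ∀ (i j : Fin n) (x : S), pathf (A i j x) = none ∨
      ∃ p, pathf x = some p ∧ pathf (A i j x) = some ((i, j) :: p))
    (hP2 : pathf zero = some [])
    (hlen : ∀ (x : S) p, pathf x = some p → p.length < n)
    (X : Fin n → Fin n → S) :
    ∀ i j, pweight A inf zero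
        (pathf ((fun Y => fun i j => FBF op inf zero A Y i j)^[n] X i j)) =
      (fun Y => fun i j => FBF op inf zero A Y i j)^[n] X i j := by
  set F : (Fin n → Fin n → S) → (Fin n → Fin n → S) :=
    fun Y => fun i j => FBF op inf zero A Y i j with hF
  have hinfpath : pathf inf = none := (hP1 inf).mpr rfl
  have foldr_sel : ∀ (g : Fin n → S) (l : List (Fin n)),
      l.foldr (fun k acc => op (g k) acc) inf = inf ∨
      ∃ k, l.foldr (fun k acc => op (g k) acc) inf = g k := by
    intro g l
    induction l with
    | nil => left; rfl
    | cons a t ih =>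
      rcases hsel (g a) (t.foldr (fun k acc => op (g k) acc) inf) with h | h
      · right; exact ⟨a, h⟩
      · rw [List.foldr_cons, h]; exact ih
  have hFcases : ∀ (Y : Fin n → Fin n → S) (i j : Fin n),
      F Y i j = inf ∨ F Y i j = zero ∨ ∃ k, F Y i j = A i k (Y k j) := by
    intro Y i j
    have hdef : F Y i j =
        op ((List.finRange n).foldr (fun k acc => op (A i k (Y k j)) acc) inf)
          (if i = j then zero else inf) := rfl
    rcases hsel ((List.finRange n).foldr (fun k acc => op (A i k (Y k j)) acc) inf)
        (if i = j then zero else inf) with h | h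
    · rcases foldr_sel (fun k => A i k (Y k j)) (List.finRange n) with h2 | ⟨k, h2⟩
      · left; rw [hdef, h, h2]
      · right; right; exact ⟨k, by rw [hdef, h, h2]⟩
    · by_cases hij : i = j
      · right; left; rw [hdef, h, if_pos hij]
      · left; rw [hdef, h, if_neg hij]
  have key : ∀ m : ℕ, ∀ i j p, pathf (F^[m] X i j) = some p → p.length < m →
      pweight A inf zero (pathf (F^[m] X i j)) = F^[m] X i j := by
    intro m
    induction m with
    | zero => intro i j p _ hl; exact absurd hl (Nat.not_lt_zero _)
    | succ m ih =>
      intro i j p hp hl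
      rw [Function.iterate_succ_apply'] at hp ⊢
      set Y := F^[m] X with hY
      rcases hFcases Y i j with h | h | ⟨k, h⟩
      · rw [h, hinfpath] at hp; exact absurd hp (by simp)
      · rw [h, hP2]; simp [pweight, pweightL]
      · rcases hP3 i k (Y k j) with h3 | ⟨q, hq, h3⟩
        · rw [h, h3] at hp; exact absurd hp (by simp)
        · rw [h, h3] at hp
          obtain rfl := Option.some.inj hp
          have hql : q.length < m := Nat.lt_of_succ_lt_succ (by simpa using hl)
          have hval := ih k j q hq hql
          rw [hq] at hval
          simp only [pweight] at hval
          rw [h, h3]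
          simp only [pweight, pweightL]
          rw [hval]
  intro i j
  rcases heq : pathf (F^[n] X i j) with _ | p
  · simp only [pweight]
    exact ((hP1 _).mp heq).symm
  · rw [← heq]
    exact key n i j p heq (hlen _ p heq)
end

section
/- In a path algebra, any fixed point X* of the synchronous Bellman-Ford operator F_A is consistent with the topology A. -/
private lemma sel_foldr {S α : Type*} (op : S → S → S)
    (hsel : ∀ x y, op x y = x ∨ op x y = y) (inf : S) (f : α → S) :
    ∀ l : List α, l.foldr (fun k acc => op (f k) acc) inf = inf ∨
      ∃ k ∈ l, l.foldr (fun k acc => op (f k) acc) inf = f k := by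
  intro l
  induction l with
  | nil => exact Or.inl rfl
  | cons a t ih =>
    simp only [List.foldr_cons]
    rcases hsel (f a) (t.foldr (fun k acc => op (f k) acc) inf) with h | h
    · exact Or.inr ⟨a, by simp, h⟩
    · rcases ih with h' | ⟨k, hk, h'⟩
      · exact Or.inl (h.trans h')
      · exact Or.inr ⟨k, by simp [hk], h.trans h'⟩

/-- Any fixed point of the synchronous Bellman-Ford operator is consistent. -/
theorem fixedPoint_consistent {S : Type*} {n : ℕ}
    (op : S → S → S) (inf zero : S)
    (A : Fin n → Fin n → S → S)
    (pathf : S → Option (List (Fin n × Fin n)))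
    (hsel : ∀ x y, op x y = x ∨ op x y = y)
    (hP1 : ∀ x, pathf x = none ↔ x = inf)
    (hP3 : ∀ (i j : Fin n) (x : S), pathf (A i j x) = none ∨
      ∃ p, pathf x = some p ∧ pathf (A i j x) = some ((i, j) :: p))
    (hP2 : pathf zero = some [])
    (hlen : ∀ (x : S) p, pathf x = some p → p.length < n)
    (X : Fin n → Fin n → S)
    (hfix : (fun i j => FBF op inf zero A X i j) = X) :
    ∀ i j, pweight A inf zero (pathf (X i j)) = X i j := by
  have hfix' : ∀ i j, FBF op inf zero A X i j = X i j := fun i j =>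
    congrFun (congrFun hfix i) j
  -- classify X i j
  have hcases : ∀ i j, X i j = inf ∨ (i = j ∧ X i j = zero) ∨
      ∃ k, X i j = A i k (X k j) := by
    intro i j
    have h := (hfix' i j).symm
    unfold FBF at h
    rcases hsel ((List.finRange n).foldr (fun k acc => op (A i k (X k j)) acc) inf)
        (if i = j then zero else inf) with hs | hs
    · rcases sel_foldr op hsel inf (fun k => A i k (X k j)) (List.finRange n) with
        hf | ⟨k, _, hf⟩
      · exact Or.inl (h.trans (hs.trans hf))
      · exact Or.inr (Or.inr ⟨k, h.trans (hs.trans hf)⟩)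
    · by_cases hij : i = j
      · exact Or.inr (Or.inl ⟨hij, h.trans (hs.trans (if_pos hij))⟩)
      · exact Or.inl (h.trans (hs.trans (if_neg hij)))
  have main : ∀ m : ℕ, ∀ i j p, pathf (X i j) = some p → p.length = m →
      pweightL A zero p = X i j := by
    intro m
    induction m using Nat.strong_induction_on with
    | _ m ih =>
      intro i j p hp hlenp
      rcases hcases i j with h | ⟨hij, h⟩ | ⟨k, h⟩
      · rw [h, (hP1 inf).mpr rfl] at hp; cases hp
      · rw [h, hP2] at hp
        cases hp
        simpa [pweightL] using h.symm
      · rcases hP3 i k (X k j) with hn | ⟨q, hq, hq'⟩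
        · rw [h, hn] at hp; cases hp
        · rw [h, hq'] at hp
          injection hp with hp
          subst hp
          have hqlen : q.length < m := by
            simp at hlenp; omega
          have := ih q.length hqlen k j q hq rfl
          simp [pweightL, this, h]
  intro i j
  cases hXij : pathf (X i j) with
  | none => simpa [pweight] using ((hP1 _).mp hXij).symm
  | some p => simpa [pweight] using main p.length i j p hXij rfl
end
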